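/- arXiv:math/9405203 — 5 statements merged into one kernel-verified Lean document; each statement's English description precedes it below -/
import Mathlib

section
/- A downward-closed set X ⊆ [ω]^ω is meager (as a subset of Cantor space 2^ω) if and only if X is not groupwise dense. -/
open Set Cardinal MeasureTheory

/-- The characteristic function of a set of naturals, as a point of Cantor space `2^ω`. -/
noncomputable def chi (x : Set ℕ) : ℕ → Bool := fun n => @decide (n ∈ x) (Classical.dec _)

/-- `[ω]^ω`: the collection of infinite subsets of ω. -/
def InfSets : Set (Set ℕ) := {x : Set ℕ | x.Infinite}

/-- `X ⊆ [ω]^ω` is downward closed for almost-inclusion `x ≤ y ↔ (x \ y).Finite`. -/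
def DownClosed (X : Set (Set ℕ)) : Prop :=
  ∀ y ∈ X, ∀ x : Set ℕ, x.Infinite → (x \ y).Finite → x ∈ X

/-- `X` is meager as a subset of Cantor space `2^ω` (product topology on `ℕ → Bool`). -/
def MeagerSet (X : Set (Set ℕ)) : Prop := IsMeagre (chi '' X)

/-- A partition of ω into consecutive finite intervals `I n = [e n, e (n+1))`. -/
structure IntervalPartition where
  e : ℕ → ℕ
  zero : e 0 = 0
  mono : StrictMono e

/-- The `n`-th interval of an interval partition. -/
def IntervalPartition.I (P : IntervalPartition) (n : ℕ) : Set ℕ :=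
  Set.Ico (P.e n) (P.e (n + 1))

/-- `X ⊆ [ω]^ω` is groupwise dense: downward closed, and for every partition of ω into
finite intervals, the union of some infinitely many of the intervals belongs to `X`. -/
def GroupwiseDense (X : Set (Set ℕ)) : Prop :=
  X ⊆ InfSets ∧ DownClosed X ∧
    ∀ P : IntervalPartition, ∃ A : Set ℕ, A.Infinite ∧ (⋃ n ∈ A, P.I n) ∈ X

/-- `g` eventually majorizes `f`. -/
def EvMaj (f g : ℕ → ℕ) : Prop := ∀ᶠ k in Filter.atTop, f k ≤ g k

/-- `M(Π)`: the infinite subsets of ω including only finitely many intervals of `Π`. -/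
def MSet (P : IntervalPartition) : Set (Set ℕ) :=
  {x : Set ℕ | x.Infinite ∧ {n : ℕ | P.I n ⊆ x}.Finite}

/-- The index `n` of the interval `I n` of `P` containing `k`. -/
def idx (P : IntervalPartition) (k : ℕ) : ℕ := Nat.findGreatest (fun n => P.e n ≤ k) k

/-- `F_Π(k)`: the largest element of `I (n+2)`, where `k ∈ I n`. -/
def FPart (P : IntervalPartition) (k : ℕ) : ℕ := P.e (idx P k + 3) - 1

/-- The groupwise density number 𝔤. -/
noncomputable def gNum : Cardinal :=
  sInf {c : Cardinal | ∃ S : Set (Set (Set ℕ)), (∀ G ∈ S, GroupwiseDense G) ∧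
    #S = c ∧ InfSets ∩ ⋂₀ S = ∅}

/-- The bounding number 𝔟. -/
noncomputable def bNum : Cardinal :=
  sInf {c : Cardinal | ∃ F : Set (ℕ → ℕ), #F = c ∧ ∀ g : ℕ → ℕ, ∃ f ∈ F, ¬ EvMaj f g}

/-- The dominating number 𝔡. -/
noncomputable def dNum : Cardinal :=
  sInf {c : Cardinal | ∃ F : Set (ℕ → ℕ), #F = c ∧ ∀ g : ℕ → ℕ, ∃ f ∈ F, EvMaj g f}

/-- `B_M`: the ideal of meager downward-closed subsets of `[ω]^ω`. -/
def BM : Set (Set (Set ℕ)) := {X : Set (Set ℕ) | X ⊆ InfSets ∧ DownClosed X ∧ MeagerSet X}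

/-- `add(B_M)`. -/
noncomputable def addBM : Cardinal :=
  sInf {c : Cardinal | ∃ S : Set (Set (Set ℕ)), S ⊆ BM ∧ #S = c ∧ ⋃₀ S ∉ BM}

/-- `cov(B_M)`. -/
noncomputable def covBM : Cardinal :=
  sInf {c : Cardinal | ∃ S : Set (Set (Set ℕ)), S ⊆ BM ∧ #S = c ∧
    {x : Set ℕ | x.Infinite ∧ xᶜ.Infinite} ⊆ ⋃₀ S}

/-- `unif(B_M)`. -/
noncomputable def unifBM : Cardinal :=
  sInf {c : Cardinal | ∃ S : Set (Set ℕ), (∀ x ∈ S, x.Infinite ∧ xᶜ.Infinite) ∧ #S = c ∧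
    ∀ X ∈ BM, ¬ S ⊆ X}

/-- `cof(B_M)`. -/
noncomputable def cofBM : Cardinal :=
  sInf {c : Cardinal | ∃ C : Set (Set (Set ℕ)), C ⊆ BM ∧ #C = c ∧
    ∀ X ∈ BM, ∃ Y ∈ C, X ⊆ Y}

/-- `X ⊆ [ω]^ω` is dense: every infinite `A` has an infinite subset `B ∈ X`. -/
def DenseM (X : Set (Set ℕ)) : Prop :=
  ∀ A : Set ℕ, A.Infinite → ∃ B ⊆ A, B.Infinite ∧ B ∈ X

/-- 𝔤′: the least number of non-meager downward-closed ideals on ω with empty intersection. -/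
noncomputable def gNum' : Cardinal :=
  sInf {c : Cardinal | ∃ S : Set (Set (Set ℕ)),
    (∀ X ∈ S, X ⊆ InfSets ∧ DownClosed X ∧ (∀ x ∈ X, ∀ y ∈ X, x ∪ y ∈ X) ∧ ¬ MeagerSet X) ∧
    #S = c ∧ InfSets ∩ ⋂₀ S = ∅}

/-- The splitting number 𝔰. -/
noncomputable def sNum : Cardinal :=
  sInf {c : Cardinal | ∃ S : Set (Set ℕ), #S = c ∧
    ∀ x : Set ℕ, x.Infinite → ∃ y ∈ S, (x ∩ y).Infinite ∧ (x \ y).Infinite}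


/-- Interior of a union of a closed set with empty interior and a set with empty
interior is empty. -/
lemma int_union_empty {α : Type*} [TopologicalSpace α] {s t : Set α} (hs : IsClosed s)
    (hsi : interior s = ∅) (hti : interior t = ∅) : interior (s ∪ t) = ∅ := by
  have h1 : interior (s ∪ t) \ s ⊆ interior t :=
    interior_maximal (fun x hx => (interior_subset hx.1).resolve_left hx.2)
      (isOpen_interior.sdiff hs)
  rw [hti, Set.subset_empty_iff, Set.diff_eq_empty] at h1
  rw [← Set.subset_empty_iff, ← hsi]
  exact interior_maximal h1 isOpen_interior

/-- Cylinder neighborhoods form a basis in Cantor space. -/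
lemma cyl {U : Set (ℕ → Bool)} (hU : IsOpen U) {f : ℕ → Bool} (hf : f ∈ U) :
    ∃ N, ∀ g : ℕ → Bool, (∀ k, k < N → g k = f k) → g ∈ U := by
  obtain ⟨I, u, h1, h2⟩ := isOpen_pi_iff.mp hU f hf
  refine ⟨(I.sup id) + 1, fun g hg => h2 ?_⟩
  intro a ha
  rw [hg a (Nat.lt_succ_of_le (Finset.le_sup (f := id) ha))]
  exact (h1 a ha).2

lemma escape {F : Set (ℕ → Bool)} (hFc : IsClosed F) (hFi : interior F = ∅) (b : ℕ)
    (s : ℕ → Bool) : ∃ (t : ℕ → Bool) (N : ℕ), (∀ k, k < b → t k = s k) ∧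
      ∀ h : ℕ → Bool, (∀ k, k < N → h k = t k) → h ∉ F := by
  have hdense : Dense Fᶜ := interior_eq_empty_iff_dense_compl.mp hFi
  have hUopen : IsOpen {g : ℕ → Bool | ∀ k, k < b → g k = s k} := by
    have heq : {g : ℕ → Bool | ∀ k, k < b → g k = s k} =
        ⋂ k ∈ Finset.range b, (fun g : ℕ → Bool => g k) ⁻¹' {s k} := by
      ext g; simp [Finset.mem_range]
    rw [heq]
    exact isOpen_biInter_finset fun k _ =>
      (isOpen_discrete _).preimage (continuous_apply k)
  obtain ⟨tt, htF, htU⟩ := hdense.exists_mem_open hUopen ⟨s, fun k _ => rfl⟩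
  obtain ⟨N, hN⟩ := cyl hFc.isOpen_compl htF
  exact ⟨tt, N, htU, fun h hh => hN h hh⟩

lemma step' (F : Set (ℕ → Bool)) (b : ℕ) :
    ∃ E, b < E ∧ ∀ s : ℕ → Bool, IsClosed F → interior F = ∅ →
      ∃ t : ℕ → Bool, (∀ k, k < b → t k = s k) ∧
        ∀ h : ℕ → Bool, (∀ k, k < E → h k = t k) → h ∉ F := by
  by_cases hF : IsClosed F ∧ interior F = ∅
  · obtain ⟨hFc, hFi⟩ := hF
    have key : ∀ σ : Fin b → Bool, ∃ (t : ℕ → Bool) (N : ℕ),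
        (∀ k, (h : k < b) → t k = σ ⟨k, h⟩) ∧
        ∀ h : ℕ → Bool, (∀ k, k < N → h k = t k) → h ∉ F := by
      intro σ
      obtain ⟨t, N, h1, h2⟩ := escape hFc hFi b (fun k => if hk : k < b then σ ⟨k, hk⟩ else false)
      exact ⟨t, N, fun k hk => by simpa [hk] using h1 k hk, h2⟩
    choose T N hT hN using key
    refine ⟨max (b + 1) (Finset.univ.sup N),
      lt_of_lt_of_le (Nat.lt_succ_self b) (le_max_left _ _), fun s _ _ => ?_⟩
    refine ⟨T (fun i => s i), fun k hk => hT _ k hk, fun h hh => hN _ h fun k hk => hh k ?_⟩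
    exact lt_of_lt_of_le hk
      (le_trans (Finset.le_sup (Finset.mem_univ _)) (le_max_right _ _))
  · exact ⟨b + 1, Nat.lt_succ_self b, fun s hc hi => absurd ⟨hc, hi⟩ hF⟩

/-- A downward-closed `X ⊆ [ω]^ω` is meager iff it is not groupwise dense. -/

theorem stmt0 (X : Set (Set ℕ)) (hX : X ⊆ InfSets) (hdc : DownClosed X) :
    MeagerSet X ↔ ¬ GroupwiseDense X := by
  constructor
  · -- meager implies not groupwise dense
    intro hM hGWD
    obtain ⟨-, -, hGP⟩ := hGWD
    obtain ⟨S, hSnwd, hScnt, hScov⟩ := isMeagre_iff_countable_union_isNowhereDense.mp hM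
    obtain ⟨f, hf⟩ := (hScnt.insert ∅).exists_eq_range (Set.insert_nonempty _ _)
    have hfnwd : ∀ i, IsNowhereDense (f i) := by
      intro i
      have hmem : f i ∈ insert ∅ S := hf ▸ Set.mem_range_self i
      rcases hmem with h | h
      · rw [h]; exact isNowhereDense_empty
      · exact hSnwd _ h
    set FF : ℕ → Set (ℕ → Bool) := fun n => ⋃ i ∈ Finset.range (n + 1), closure (f i)
      with hFFdef
    have hFFc : ∀ n, IsClosed (FF n) := fun n =>
      isClosed_biUnion_finset fun i _ => isClosed_closure
    have hFFi : ∀ n, interior (FF n) = ∅ := by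
      have key : ∀ n, interior (⋃ i ∈ Finset.range n, closure (f i)) = ∅ := by
        intro n
        induction n with
        | zero => simp
        | succ n ih =>
          rw [Finset.range_add_one, Finset.set_biUnion_insert]
          exact int_union_empty isClosed_closure (hfnwd n) ih
      exact fun n => key (n + 1)
    have hFFmono : ∀ {m n : ℕ}, m ≤ n → FF m ⊆ FF n := by
      intro m n hmn g hg
      simp only [hFFdef, Set.mem_iUnion] at hg ⊢
      obtain ⟨i, hi, h⟩ := hg
      simp only [Finset.mem_range] at hi
      exact ⟨i, by simp only [Finset.mem_range]; omega, h⟩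
    have hcov : ∀ g ∈ chi '' X, ∃ n, g ∈ FF n := by
      intro g hg
      obtain ⟨s, hsS, hgs⟩ := hScov hg
      have hs' : s ∈ Set.range f := hf ▸ Set.mem_insert_of_mem _ hsS
      obtain ⟨i, rfl⟩ := hs'
      refine ⟨i, ?_⟩
      simp only [hFFdef, Set.mem_iUnion]
      exact ⟨i, Finset.self_mem_range_succ i, subset_closure hgs⟩
    have hE : ∃ e : ℕ → ℕ, e 0 = 0 ∧ StrictMono e ∧ ∀ n (s : ℕ → Bool),
        ∃ t : ℕ → Bool, (∀ k, k < e n → t k = s k) ∧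
          ∀ h : ℕ → Bool, (∀ k, k < e (n + 1) → h k = t k) → h ∉ FF n := by
      refine ⟨fun n => Nat.rec 0 (fun m b => (step' (FF m) b).choose) n, rfl, ?_, ?_⟩
      · exact strictMono_nat_of_lt_succ fun n => (step' (FF n) _).choose_spec.1
      · intro n s
        exact (step' (FF n) _).choose_spec.2 s (hFFc n) (hFFi n)
    obtain ⟨e, he0, hemono, CC⟩ := hE
    choose T hT1 hT2 using CC
    set P : IntervalPartition := ⟨e, he0, hemono⟩ with hPdef
    obtain ⟨A, hAinf, hxX⟩ := hGP P
    set x : Set ℕ := ⋃ n ∈ A, P.I n with hxdef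
    have hAinf' : {n | n ∈ A}.Infinite := by simpa using hAinf
    set a : ℕ → ℕ := fun k => Nat.nth (· ∈ A) k with hadef
    have haA : ∀ k, a k ∈ A := fun k => Nat.nth_mem_of_infinite hAinf' k
    have hamono : StrictMono a := Nat.nth_strictMono hAinf'
    obtain ⟨v, hv0, hvS⟩ : ∃ v : ℕ → ℕ → Bool,
        (∀ m, v 0 m = @decide (∃ j, m = e (a (2 * j + 1))) (Classical.dec _)) ∧
        ∀ k m, v (k + 1) m =
          if m < e (a (2 * k) + 1) then T (a (2 * k)) (v k) m else v k m :=
      ⟨fun k => Nat.rec (fun m => @decide (∃ j, m = e (a (2 * j + 1))) (Classical.dec _))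
        (fun k vk m => if m < e (a (2 * k) + 1) then T (a (2 * k)) vk m else vk m) k,
        fun m => rfl, fun k m => rfl⟩
    have hP1 : ∀ k m, m < e (a (2 * k)) → v (k + 1) m = v k m := by
      intro k m h
      rw [hvS, if_pos (h.trans (hemono (Nat.lt_succ_self _)))]
      exact hT1 (a (2 * k)) (v k) m h
    have hStab : ∀ k j m, k ≤ j → m < e (a (2 * k)) → v j m = v k m := by
      intro k j m hkj hm
      induction j, hkj using Nat.le_induction with
      | base => rfl
      | succ j hkj ih =>
        rw [← ih]
        exact hP1 j m (lt_of_lt_of_le hm (hemono.monotone (hamono.monotone (by omega))))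
    have hStab2 : ∀ k j m, k + 1 ≤ j → m < e (a (2 * k) + 1) → v j m = v (k + 1) m := by
      intro k j m hkj hm
      induction j, hkj using Nat.le_induction with
      | base => rfl
      | succ j hkj ih =>
        rw [← ih]
        have h5 : a (2 * k) < a (2 * j) := hamono (by omega)
        have h6 : e (a (2 * k) + 1) ≤ e (a (2 * j)) := hemono.monotone (by omega)
        exact hP1 j m (lt_of_lt_of_le hm h6)
    obtain ⟨χ, hχ⟩ : ∃ χ : ℕ → Bool, ∀ m, χ m = v (m + 1) m :=
      ⟨fun m => v (m + 1) m, fun m => rfl⟩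
    have hbig : ∀ m : ℕ, m < e (a (2 * (m + 1))) := by
      intro m
      have h1 : 2 * (m + 1) ≤ a (2 * (m + 1)) := hamono.le_apply
      have h2 : a (2 * (m + 1)) ≤ e (a (2 * (m + 1))) := hemono.le_apply
      omega
    have hχeq2 : ∀ k m, m < e (a (2 * k) + 1) → χ m = T (a (2 * k)) (v k) m := by
      intro k m hm
      have h1 : v (max (k + 1) (m + 1)) m = v (m + 1) m :=
        hStab (m + 1) _ m (le_max_right _ _) (hbig m)
      have h2 : v (max (k + 1) (m + 1)) m = v (k + 1) m :=
        hStab2 k _ m (le_max_left _ _) hm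
      have h3 : χ m = v (k + 1) m := by rw [hχ m, ← h1, h2]
      rw [h3, hvS, if_pos hm]
    have hesc : ∀ n, χ ∉ FF n := by
      intro n hmem
      have h1 : χ ∉ FF (a (2 * n)) :=
        hT2 (a (2 * n)) (v n) χ (fun m hm => hχeq2 n m hm)
      have hn : n ≤ a (2 * n) := le_trans (by omega) hamono.le_apply
      exact h1 (hFFmono hn hmem)
    have hvx : ∀ k m, v k m = true → m ∈ x := by
      intro k
      induction k with
      | zero =>
        intro m hm
        rw [hv0] at hm
        obtain ⟨j, rfl⟩ := @of_decide_eq_true (∃ j, m = e (a (2 * j + 1))) (Classical.dec _) hm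
        exact Set.mem_biUnion (haA _)
          (Set.mem_Ico.mpr ⟨le_rfl, hemono (Nat.lt_succ_self _)⟩)
      | succ k ih =>
        intro m hm
        by_cases h : m < e (a (2 * k) + 1)
        · rw [hvS, if_pos h] at hm
          by_cases h2 : m < e (a (2 * k))
          · refine ih m ?_
            rw [← hT1 (a (2 * k)) (v k) m h2]
            exact hm
          · exact Set.mem_biUnion (haA (2 * k))
              (Set.mem_Ico.mpr ⟨Nat.le_of_not_lt h2, h⟩)
        · rw [hvS, if_neg h] at hm
          exact ih m hm
    have hpts : ∀ j k, v k (e (a (2 * j + 1))) = true := by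
      intro j k
      induction k with
      | zero => rw [hv0]; exact @decide_eq_true _ (Classical.dec _) ⟨j, rfl⟩
      | succ k ih =>
        by_cases h : e (a (2 * j + 1)) < e (a (2 * k) + 1)
        · rw [hvS, if_pos h]
          have h3 : a (2 * j + 1) < a (2 * k) + 1 := hemono.lt_iff_lt.mp h
          have h4 : a (2 * j + 1) ≠ a (2 * k) := fun he => by
            have h6 := hamono.injective he; omega
          have h2 : e (a (2 * j + 1)) < e (a (2 * k)) := hemono (by omega)
          rw [hT1 _ _ _ h2]
          exact ih
        · rw [hvS, if_neg h]
          exact ih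
    set y : Set ℕ := {m | χ m = true} with hydef
    have hyx : y ⊆ x := fun m hm => hvx (m + 1) m (by rw [← hχ m]; exact hm)
    have hyinf : y.Infinite := by
      refine Set.infinite_of_injective_forall_mem
        (f := fun j : ℕ => e (a (2 * j + 1))) ?_ ?_
      · intro j1 j2 hj
        have h6 := hamono.injective (hemono.injective hj)
        omega
      · intro j
        show χ (e (a (2 * j + 1))) = true
        rw [hχ]
        exact hpts j _
    have hyX : y ∈ X := hdc x hxX y hyinf
      (by rw [Set.diff_eq_empty.mpr hyx]; exact Set.finite_empty)
    have hchi : chi y = χ := by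
      funext m
      have hmy : (m ∈ y) = (χ m = true) := rfl
      simp only [chi, hmy]
      cases χ m <;> simp
    obtain ⟨n, hn⟩ := hcov (chi y) ⟨y, hyX, rfl⟩
    rw [hchi] at hn
    exact hesc n hn

  · -- not groupwise dense implies meager
    intro hnG
    have hP : ∃ P : IntervalPartition, ∀ A : Set ℕ, A.Infinite → (⋃ n ∈ A, P.I n) ∉ X := by
      by_contra hc
      push_neg at hc
      exact hnG ⟨hX, hdc, fun P => hc P⟩
    obtain ⟨P, hP⟩ := hP
    set C : ℕ → Set (ℕ → Bool) :=
      fun m => {g | ∀ n, m ≤ n → ∃ k, k ∈ P.I n ∧ g k = false} with hC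
    have hCc : ∀ m, IsClosed (C m) := by
      intro m
      have heq : C m = ⋂ n, ⋂ (_ : m ≤ n), ⋃ k ∈ P.I n, {g : ℕ → Bool | g k = false} := by
        ext g; simp [hC]
      rw [heq]
      refine isClosed_iInter fun n => isClosed_iInter fun _ => ?_
      refine Set.Finite.isClosed_biUnion (Set.finite_Ico _ _) fun k _ => ?_
      exact isClosed_eq (continuous_apply k) continuous_const
    have hCi : ∀ m, interior (C m) = ∅ := by
      intro m
      rw [Set.eq_empty_iff_forall_notMem]
      intro g hg
      obtain ⟨N, hN⟩ := cyl isOpen_interior hg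
      set n := max m N with hn
      set g' : ℕ → Bool := fun k => if P.e n ≤ k ∧ k < P.e (n + 1) then true else g k with hg'
      have hmem : g' ∈ C m := by
        refine interior_subset (hN g' fun k hk => ?_)
        rw [hg']
        refine if_neg ?_
        rintro ⟨h1, -⟩
        have h2 : n ≤ P.e n := P.mono.le_apply
        omega
      obtain ⟨k, hk1, hk2⟩ := hmem n (le_max_left _ _)
      have hk3 : P.e n ≤ k ∧ k < P.e (n + 1) := hk1
      rw [hg'] at hk2
      simp only [if_pos hk3] at hk2
      exact absurd hk2 (by decide)
    have hCm : ∀ m, IsMeagre (C m) := by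
      intro m
      rw [isMeagre_iff_countable_union_isNowhereDense]
      refine ⟨{C m}, ?_, Set.countable_singleton _, by simp⟩
      intro t ht
      rw [Set.mem_singleton_iff] at ht
      subst ht
      exact (hCc m).isNowhereDense_iff.mpr (hCi m)
    have hcover : chi '' X ⊆ ⋃ m, C m := by
      rintro - ⟨xx, hxx, rfl⟩
      have hAfin : {n | P.I n ⊆ xx}.Finite := by
        by_contra hinf
        have hinf' : Set.Infinite {n | P.I n ⊆ xx} := hinf
        apply hP _ hinf'
        have hsub : (⋃ n ∈ {n | P.I n ⊆ xx}, P.I n) ⊆ xx :=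
          Set.iUnion₂_subset fun n hn => hn
        have himg : (P.e '' {n | P.I n ⊆ xx}).Infinite :=
          hinf'.image (Set.injOn_of_injective P.mono.injective)
        have hinf2 : (⋃ n ∈ {n | P.I n ⊆ xx}, P.I n).Infinite := by
          refine himg.mono ?_
          rintro - ⟨n, hn, rfl⟩
          exact Set.mem_biUnion hn ⟨le_rfl, P.mono (Nat.lt_succ_self n)⟩
        exact hdc xx hxx _ hinf2
          (by rw [Set.diff_eq_empty.mpr hsub]; exact Set.finite_empty)
      obtain ⟨m, hm⟩ := hAfin.bddAbove
      refine Set.mem_iUnion.mpr ⟨m + 1, fun n hn => ?_⟩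
      have hnot : ¬ P.I n ⊆ xx := by
        intro hsub
        have := hm hsub
        omega
      obtain ⟨k, hk, hknot⟩ := Set.not_subset.mp hnot
      refine ⟨k, hk, ?_⟩
      simp only [chi, decide_eq_false_iff_not]
      exact hknot
    exact (isMeagre_iUnion hCm).mono hcover
end

section
/- If κ < 𝔤 and (G_i)_{i∈I} is a family of groupwise dense subsets of [ω]^ω with |I| = κ, then the intersection ⋂_{i∈I} G_i is groupwise dense. -/
open Set Cardinal MeasureTheory

/-!
For a fixed interval partition `Π`, each set `{x | ⋃_{n ∈ x} Π.I n ∈ G i}` is again groupwise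
dense: an interval partition of the index set `ω` merges the intervals of `Π` into a coarser
interval partition, and `G i` picks infinitely many of its blocks. Since there are fewer than `𝔤`
of these sets, they share an infinite member `x`, and `⋃_{n ∈ x} Π.I n` lies in every `G i`.
-/

theorem Monotone.biUnion_Ico_Ico_map_succ {β : Type*} [LinearOrder β] {f : ℕ → β}
    (hf : Monotone f) {a b : ℕ} (hab : a ≤ b) :
    ⋃ m ∈ Ico a b, Ico (f m) (f (m + 1)) = Ico (f a) (f b) := by
  induction b, hab using Nat.le_induction with
  | base => simp
  | succ b hab ih =>
    have hinsert : Ico a (b + 1) = insert b (Ico a b) := Order.Ico_succ_right_eq_insert hab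
    rw [hinsert, biUnion_insert, ih, union_comm, Ico_union_Ico_eq_Ico (hf hab) (hf b.le_succ)]

namespace IntervalPartition

variable (P Q : IntervalPartition)

theorem e_mem_I (n : ℕ) : P.e n ∈ P.I n :=
  ⟨le_rfl, P.mono n.lt_succ_self⟩

theorem infinite_biUnion_I {A : Set ℕ} (hA : A.Infinite) : (⋃ n ∈ A, P.I n).Infinite := by
  refine infinite_of_forall_exists_gt fun k => ?_
  obtain ⟨n, hn, hkn⟩ := hA.exists_gt k
  exact ⟨P.e n, mem_biUnion hn (P.e_mem_I n), hkn.trans_le P.mono.le_apply⟩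

def coarsen : IntervalPartition :=
  ⟨P.e ∘ Q.e, by simp [Q.zero, P.zero], P.mono.comp Q.mono⟩

theorem coarsen_I (n : ℕ) : (P.coarsen Q).I n = ⋃ m ∈ Q.I n, P.I m :=
  (P.mono.monotone.biUnion_Ico_Ico_map_succ (Q.mono.monotone n.le_succ)).symm

theorem biUnion_coarsen_I (A : Set ℕ) :
    ⋃ n ∈ A, (P.coarsen Q).I n = ⋃ m ∈ ⋃ n ∈ A, Q.I n, P.I m := by
  simp only [coarsen_I, biUnion_iUnion]

end IntervalPartition

theorem GroupwiseDense.setOf_biUnion_I_mem {G : Set (Set ℕ)} (hG : GroupwiseDense G)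
    (P : IntervalPartition) : GroupwiseDense {x | x.Infinite ∧ ⋃ n ∈ x, P.I n ∈ G} := by
  obtain ⟨-, hGdown, hGpart⟩ := hG
  refine ⟨fun x hx => hx.1, ?_, fun Q => ?_⟩
  · rintro y ⟨-, hyG⟩ x hx hxy
    refine ⟨hx, hGdown _ hyG _ (P.infinite_biUnion_I hx) ?_⟩
    exact (hxy.biUnion fun n _ => finite_Ico _ _).subset (biUnion_sdiff_biUnion_subset _ _ _)
  · obtain ⟨A, hA, hAG⟩ := hGpart (P.coarsen Q)
    exact ⟨A, hA, Q.infinite_biUnion_I hA, P.biUnion_coarsen_I Q A ▸ hAG⟩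

theorem exists_infinite_forall_mem_of_mk_lt_gNum {ι : Type} {H : ι → Set (Set ℕ)}
    (hcard : #ι < gNum) (hH : ∀ i, GroupwiseDense (H i)) :
    ∃ x : Set ℕ, x.Infinite ∧ ∀ i, x ∈ H i := by
  by_contra! hempty
  have hinter : InfSets ∩ ⋂₀ range H = ∅ :=
    eq_empty_of_forall_notMem fun x ⟨hx, hxH⟩ => by
      obtain ⟨i, hi⟩ := hempty x hx
      exact hi (hxH _ (mem_range_self i))
  have hle : gNum ≤ #(range H) := csInf_le' ⟨range H, forall_mem_range.2 hH, rfl, hinter⟩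
  exact (hle.trans mk_range_le).not_gt hcard

theorem downClosed_inter_iInter {ι : Type*} {G : ι → Set (Set ℕ)} (hG : ∀ i, DownClosed (G i)) :
    DownClosed (InfSets ∩ ⋂ i, G i) := by
  rintro y ⟨-, hyG⟩ x hx hxy
  exact ⟨hx, mem_iInter.2 fun i => hG i _ (mem_iInter.1 hyG i) _ hx hxy⟩

/-- The intersection of fewer than 𝔤 groupwise dense sets is groupwise dense. -/
theorem stmt2 (ι : Type) (G : ι → Set (Set ℕ)) (hcard : #ι < gNum)
    (hG : ∀ i, GroupwiseDense (G i)) :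
    GroupwiseDense (InfSets ∩ ⋂ i, G i) := by
  refine ⟨inter_subset_left, downClosed_inter_iInter fun i => (hG i).2.1, fun P => ?_⟩
  obtain ⟨x, hx, hxG⟩ :=
    exists_infinite_forall_mem_of_mk_lt_gNum hcard fun i => (hG i).setOf_biUnion_I_mem P
  exact ⟨x, hx, P.infinite_biUnion_I hx, mem_iInter.2 fun i => (hxG i).2⟩
end

section
/- Let Π = (I_n)_{n∈ω} be an interval partition of ω (intervals listed in natural order) and define F_Π : ω → ω by F_Π(k) = max I_{n+2} where n is such that k ∈ I_n. Suppose g : ω → ω eventually majorizes F_Π (F_Π(k) ≤ g(k) for all but finitely many k), and let Σ be an interval partition of ω each of whose intervals [a,b] satisfies g(a) ≤ b. Then M(Π) ⊆ M(Σ). -/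
open Set Cardinal MeasureTheory

/-!
Let `a` be the left end of an interval `J` of `Σ` lying far enough out, and let `I n` be the
interval of `Π` containing `a`. Then `I (n+1)` starts after `a` and ends before `max I (n+2)`,
which is `F_Π(a) ≤ g(a) ≤ max J`; so `I (n+1) ⊆ J`. Hence a set including infinitely many
intervals of `Σ` includes infinitely many of `Π`, since `n → ∞` as `J` moves out.
-/

open Filter

namespace IntervalPartition

variable (P : IntervalPartition)

theorem le_idx_of_e_le {n k : ℕ} (h : P.e n ≤ k) : n ≤ idx P k :=
  Nat.le_findGreatest (P.mono.le_apply.trans h) h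

theorem lt_e_idx_succ (k : ℕ) : k < P.e (idx P k + 1) := by
  by_contra! h
  have := P.le_idx_of_e_le h
  omega

theorem tendsto_idx : Tendsto (idx P) atTop atTop :=
  tendsto_atTop_atTop.mpr fun n => ⟨P.e n, fun _ hk => P.le_idx_of_e_le hk⟩

theorem I_idx_succ_subset_Ico {a b : ℕ} (h : FPart P a ≤ b - 1) :
    P.I (idx P a + 1) ⊆ Ico a b := by
  have hlt : P.e (idx P a + 1 + 1) < P.e (idx P a + 3) := P.mono (by omega)
  unfold FPart at h
  exact Ico_subset_Ico (P.lt_e_idx_succ a).le (by omega)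

theorem MSet_subset_of_eventually_I_subset {S : IntervalPartition} {f : ℕ → ℕ}
    (hf : Tendsto f atTop atTop) (h : ∀ᶠ j in atTop, P.I (f j) ⊆ S.I j) :
    MSet P ⊆ MSet S := by
  rintro x ⟨hx, hPx⟩
  refine ⟨hx, ?_⟩
  have hnot : ∀ᶠ j in atTop, ¬ S.I j ⊆ x := by
    have hfar : ∀ᶠ j in atTop, f j ∉ {n | P.I n ⊆ x} :=
      hf.eventually (Nat.cofinite_eq_atTop ▸ hPx.eventually_cofinite_notMem)
    filter_upwards [h, hfar] with j hPS hPj hSx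
    exact hPj (hPS.trans hSx)
  simpa [← Nat.cofinite_eq_atTop, eventually_cofinite] using hnot

end IntervalPartition

/-- Lemma 1: if `g` eventually majorizes `F_Π` and every interval `[a,b]` of `Σ`
satisfies `g a ≤ b`, then `M(Π) ⊆ M(Σ)`. -/
theorem stmt5 (P : IntervalPartition) (g : ℕ → ℕ) (hg : EvMaj (FPart P) g)
    (S : IntervalPartition) (hS : ∀ j : ℕ, g (S.e j) ≤ S.e (j + 1) - 1) :
    MSet P ⊆ MSet S := by
  refine P.MSet_subset_of_eventually_I_subset
    ((tendsto_add_atTop_nat 1).comp (P.tendsto_idx.comp S.mono.tendsto_atTop)) ?_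
  filter_upwards [S.mono.tendsto_atTop.eventually hg] with j hj
  exact P.I_idx_succ_subset_Ico (hj.trans (hS j))
end

section
/- 𝔟 ≤ add(B_M): every family of fewer than 𝔟 meager downward-closed subsets of [ω]^ω has meager union; equivalently, the least cardinality of a family of meager downward-closed subsets of [ω]^ω whose union is not meager is at least 𝔟. -/
open Set Cardinal MeasureTheory

/-!
Talagrand's argument: if `X` is meager and closed under almost-subsets, then there is an interval
partition `Π` such that every member of `X` includes only finitely many intervals of `Π`, i.e.
`X ⊆ M(Π)`. Indeed, take decreasing dense open sets `Uₙ` whose intersection misses `X`, and choose the intervals so long that any prefix up to `Iₙ` extends, by a block on `Iₙ`, into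
a cylinder inside `Uₙ`. If `x ∈ X` included infinitely many intervals `Iₙ`, putting these blocks
on them would produce an infinite `y ⊆ x` in all those `Uₙ`, hence in `⋂ₙ Uₙ`, although `y ∈ X`.

Each `M(Π)` is meager, and fewer than `𝔟` partitions `Πᵢ` are dominated by a single one `Π'`,
in the sense that almost every interval of `Π'` includes an interval of `Πᵢ`; then
`M(Πᵢ) ⊆ M(Π')` for every `i`. For `𝔟 ≤ add(B_M)` one also needs some family in `B_M` with
non-meager union (else the infimum is over the empty set): `B_M` itself is one, as its union
contains every infinite, coinfinite set.
-/

open Filter PiNat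

lemma exists_cylinder_subset {E : ℕ → Type*} [∀ n, TopologicalSpace (E n)]
    [∀ n, DiscreteTopology (E n)] {U : Set (∀ n, E n)} (hU : IsOpen U) {x : ∀ n, E n}
    (hx : x ∈ U) : ∃ n, cylinder x n ⊆ U := by
  obtain ⟨_, ⟨y, n, rfl⟩, hxy, hsub⟩ :=
    (isTopologicalBasis_cylinders E).exists_subset_of_mem_open hx hU
  exact ⟨n, mem_cylinder_iff_eq.1 hxy ▸ hsub⟩

lemma IsMeagre.exists_antitone_isOpen_dense {X : Type*} [TopologicalSpace X] [BaireSpace X]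
    {Y : Set X} (hY : IsMeagre Y) :
    ∃ U : ℕ → Set X, Antitone U ∧ (∀ n, IsOpen (U n)) ∧ (∀ n, Dense (U n)) ∧
      Disjoint Y (⋂ n, U n) := by
  obtain ⟨S, hSo, hSd, hSc, hSY⟩ := mem_residual_iff.1 hY
  obtain ⟨V, hV⟩ := (hSc.insert Set.univ).exists_eq_range (insert_nonempty _ _)
  have hVS : ∀ n, V n = Set.univ ∨ V n ∈ S := fun n =>
    (hV ▸ mem_range_self n : V n ∈ insert Set.univ S)
  have hVo : ∀ n, IsOpen (V n) := fun n => (hVS n).elim (· ▸ isOpen_univ) (hSo _)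
  have hVd : ∀ n, Dense (V n) := fun n => (hVS n).elim (· ▸ dense_univ) (hSd _)
  refine ⟨fun n => ⋂ j ∈ Iic n, V j,
    fun m n hmn => biInter_subset_biInter_left (Iic_subset_Iic.2 hmn),
    fun n => (finite_Iic n).isOpen_biInter fun j _ => hVo j,
    fun n => dense_biInter_of_isOpen (fun j _ => hVo j) (to_countable _) (fun j _ => hVd j),
    disjoint_left.2 fun x hxY hxU => hSY (fun t ht => ?_) hxY⟩
  obtain ⟨n, rfl⟩ : t ∈ range V := hV ▸ mem_insert_of_mem Set.univ ht
  exact mem_iInter₂.1 (mem_iInter.1 hxU n) n (le_refl n)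

lemma exists_forall_mem_cylinder {α : Type*} {e : ℕ → ℕ} (he : StrictMono e) (h : ℕ → ℕ → α)
    (hh : ∀ n, h (n + 1) ∈ cylinder (h n) (e n)) : ∃ g, ∀ n, g ∈ cylinder (h n) (e n) := by
  have hmono : ∀ n m, n ≤ m → h m ∈ cylinder (h n) (e n) := by
    intro n m hnm
    induction m, hnm using Nat.le_induction with
    | base => exact self_mem_cylinder _ _
    | succ m hnm ih =>
      exact mem_cylinder_iff.2 fun k hk =>
        (mem_cylinder_iff.1 (hh m) k (hk.trans_le (he.monotone hnm))).trans
          (mem_cylinder_iff.1 ih k hk)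
  refine ⟨fun k => h (k + 1) k, fun n => mem_cylinder_iff.2 fun k hk => ?_⟩
  rcases le_total n (k + 1) with hnk | hkn
  · exact mem_cylinder_iff.1 (hmono n (k + 1) hnk) k hk
  · exact (mem_cylinder_iff.1 (hmono (k + 1) n hkn) k (k.lt_succ_self.trans_le he.le_apply)).symm

section CantorSpace

variable {U : Set (ℕ → Bool)}

lemma Dense.exists_extension_cylinder_subset (hU : IsOpen U) (hd : Dense U) (f : ℕ → Bool)
    (m : ℕ) : ∃ g ∈ cylinder f m, g m = true ∧
      ∃ m' > m, (∀ k ≥ m', g k = false) ∧ cylinder g m' ⊆ U := by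
  obtain ⟨g₀, hg₀f, hg₀U⟩ := hd.inter_open_nonempty _
    (isOpen_cylinder _ (Function.update f m true) (m + 1)) ⟨_, self_mem_cylinder _ _⟩
  obtain ⟨m₀, hm₀⟩ := exists_cylinder_subset hU hg₀U
  let m' := max m₀ (m + 1)
  let g : ℕ → Bool := fun k => if k < m' then g₀ k else false
  have hgg₀ : g ∈ cylinder g₀ m' := mem_cylinder_iff.2 fun k hk => if_pos hk
  have hg₀ : ∀ k ≤ m, g k = Function.update f m true k := fun k hk =>
    (mem_cylinder_iff.1 hgg₀ k (by omega)).trans (mem_cylinder_iff.1 hg₀f k (by omega))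
  refine ⟨g, mem_cylinder_iff.2 fun k hk => ?_, by simpa using hg₀ m le_rfl, m', by omega,
    fun k hk => if_neg (by omega), ?_⟩
  · simpa [Function.update_of_ne hk.ne] using hg₀ k hk.le
  · rw [mem_cylinder_iff_eq.1 hgg₀]
    exact (cylinder_anti _ (le_max_left _ _)).trans hm₀

-- Uniformity in `f` comes from compactness: finitely many cylinders of length `m` cover.
lemma Dense.exists_uniform_extension_cylinder_subset (hU : IsOpen U) (hd : Dense U) (m : ℕ) :
    ∃ m' > m, ∀ f : ℕ → Bool, ∃ g ∈ cylinder f m, g m = true ∧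
      (∀ k ≥ m', g k = false) ∧ cylinder g m' ⊆ U := by
  choose g hgf hgm M _ hgM hgU using fun f => hd.exists_extension_cylinder_subset hU f m
  obtain ⟨t, ht⟩ := isCompact_univ.elim_finite_subcover (fun f => PiNat.cylinder f m)
    (fun f => isOpen_cylinder (fun _ => Bool) f m)
    fun f _ => mem_iUnion.2 ⟨f, self_mem_cylinder f m⟩
  refine ⟨t.sup M + m + 1, by omega, fun f => ?_⟩
  obtain ⟨f₀, hf₀, hf⟩ := mem_iUnion₂.1 (ht (mem_univ f))
  have hM : M f₀ ≤ t.sup M + m + 1 := (Finset.le_sup hf₀).trans (by omega)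
  refine ⟨g f₀, ?_, hgm f₀, fun k hk => hgM f₀ k (hM.trans hk),
    (cylinder_anti _ hM).trans (hgU f₀)⟩
  rw [mem_cylinder_iff_eq.1 hf]
  exact hgf f₀

end CantorSpace

namespace IntervalPartition

noncomputable def ofNext (next : ℕ → ℕ → ℕ) (h : ∀ n m, m < next n m) : IntervalPartition where
  e n := Nat.rec (motive := fun _ => ℕ) 0 next n
  zero := rfl
  mono := strictMono_nat_of_lt_succ fun n => h n _

@[simp]
lemma ofNext_e_succ (next : ℕ → ℕ → ℕ) (h : ∀ n m, m < next n m) (n : ℕ) :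
    (ofNext next h).e (n + 1) = next n ((ofNext next h).e n) := rfl

lemma exists_mem_I (P : IntervalPartition) (k : ℕ) : ∃ n, k ∈ P.I n := by
  have hex : ∃ n, k < P.e (n + 1) := ⟨k, k.lt_succ_self.trans_le P.mono.le_apply⟩
  refine ⟨Nat.find hex, ?_, Nat.find_spec hex⟩
  cases hn : Nat.find hex with
  | zero => simp [P.zero]
  | succ n => exact not_lt.1 (Nat.find_min hex (by omega))

def IsAdaptedTo (P : IntervalPartition) (U : ℕ → Set (ℕ → Bool)) : Prop :=
  ∀ n f, ∃ g ∈ cylinder f (P.e n), g (P.e n) = true ∧ (∀ k ≥ P.e (n + 1), g k = false) ∧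
    cylinder g (P.e (n + 1)) ⊆ U n

lemma exists_isAdaptedTo {U : ℕ → Set (ℕ → Bool)} (hU : ∀ n, IsOpen (U n))
    (hd : ∀ n, Dense (U n)) : ∃ P : IntervalPartition, P.IsAdaptedTo U := by
  choose next hnext hext using fun n => (hd n).exists_uniform_extension_cylinder_subset (hU n)
  exact ⟨ofNext next hnext, fun n => hext n _⟩

lemma IsAdaptedTo.exists_supported_mem {P : IntervalPartition} {U : ℕ → Set (ℕ → Bool)}
    (hP : P.IsAdaptedTo U) (A : Set ℕ) : ∃ g : ℕ → Bool,
      (∀ n ∈ A, g (P.e n) = true ∧ g ∈ U n) ∧ ∀ n ∉ A, ∀ k ∈ P.I n, g k = false := by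
  classical
  choose G hGf hGe hGzero hGU using hP
  obtain ⟨h, h0, hsucc⟩ : ∃ h : ℕ → ℕ → Bool, h 0 = (fun _ => false) ∧
      ∀ n, h (n + 1) = if n ∈ A then G n (h n) else h n :=
    ⟨fun n => Nat.rec (fun _ => false) (fun n hn => if n ∈ A then G n hn else hn) n, rfl,
      fun _ => rfl⟩
  have hzero : ∀ n, ∀ k ≥ P.e n, h n k = false := by
    intro n
    induction n with
    | zero => simp [h0]
    | succ n ih =>
      intro k hk
      rw [hsucc]
      split_ifs
      · exact hGzero _ _ k hk
      · exact ih k ((P.mono n.lt_succ_self).le.trans hk)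
  have hcoh : ∀ n, h (n + 1) ∈ cylinder (h n) (P.e n) := fun n => by
    rw [hsucc]
    split_ifs
    exacts [hGf _ _, self_mem_cylinder _ _]
  obtain ⟨g, hg⟩ := exists_forall_mem_cylinder P.mono h hcoh
  refine ⟨g, fun n hn => ?_, fun n hn k hk => ?_⟩
  · have hgn := hg (n + 1)
    rw [hsucc, if_pos hn] at hgn
    exact ⟨(mem_cylinder_iff.1 hgn _ (P.mono n.lt_succ_self)).trans (hGe n _), hGU n _ hgn⟩
  · have hgn := hg (n + 1)
    rw [hsucc, if_neg hn] at hgn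
    rw [mem_cylinder_iff.1 hgn k hk.2]
    exact hzero n k hk.1

end IntervalPartition

lemma chi_eq_true {x : Set ℕ} {k : ℕ} : chi x k = true ↔ k ∈ x := by simp [chi]

lemma chi_setOf (f : ℕ → Bool) : chi {k | f k = true} = f := by
  funext k
  rcases hf : f k with _ | _ <;> simp [chi, hf]

lemma MeagerSet.mono {X Y : Set (Set ℕ)} (hXY : X ⊆ Y) (hY : MeagerSet Y) : MeagerSet X :=
  IsMeagre.mono (image_mono hXY) hY

lemma isMeagre_setOf_eventually_mem (c : ℕ → Bool) {U : ℕ → Set (ℕ → Bool)}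
    (hU : ∀ n, IsClosed (U n))
    (hc : ∀ m, ∃ᶠ n in atTop, ∀ f : ℕ → Bool, (∀ k ≥ m, f k = c k) → f ∉ U n) :
    IsMeagre {f | ∀ᶠ n in atTop, f ∈ U n} := by
  have hunion : {f | ∀ᶠ n in atTop, f ∈ U n} = ⋃ N, ⋂ n ≥ N, U n := by
    ext
    simp [eventually_atTop]
  rw [hunion]
  refine isMeagre_iUnion fun N => IsNowhereDense.isMeagre ?_
  refine (isClosed_biInter fun n _ => hU n).isNowhereDense_iff.2 (eq_empty_of_forall_notMem
    fun f hf => ?_)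
  obtain ⟨m, hm⟩ := exists_cylinder_subset isOpen_interior hf
  obtain ⟨n, hnc, hnN⟩ := ((hc m).and_eventually (eventually_ge_atTop N)).exists
  let g : ℕ → Bool := fun k => if k < m then f k else c k
  have hg : g ∈ cylinder f m := mem_cylinder_iff.2 fun k hk => if_pos hk
  exact hnc g (fun k hk => if_neg (by omega)) (mem_iInter₂.1 (interior_subset (hm hg)) n hnN)

lemma isMeagre_setOf_eventually_eq (b : Bool) :
    IsMeagre {f : ℕ → Bool | ∀ᶠ n in atTop, f n = b} :=
  isMeagre_setOf_eventually_mem (fun _ => !b) (U := fun n => {f | f n = b})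
    (fun n => isClosed_eq (continuous_apply n) continuous_const)
    fun m => (eventually_ge_atTop m).frequently.mono fun n hn f hf hfn => by
      have := hf n hn
      cases b <;> simp_all

lemma meagerSet_MSet (P : IntervalPartition) : MeagerSet (MSet P) := by
  refine IsMeagre.mono ?_ (isMeagre_setOf_eventually_mem (fun _ => true)
    (U := fun n => ⋃ k ∈ P.I n, {f | f k = false})
    (fun n => (finite_Ico _ _).isClosed_biUnion fun k _ =>
      isClosed_eq (continuous_apply k) continuous_const)
    fun m => (eventually_ge_atTop m).frequently.mono fun n hn f hf hfU => ?_)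
  · rintro _ ⟨x, ⟨-, hx⟩, rfl⟩
    have hx' := hx.eventually_cofinite_notMem
    rw [Nat.cofinite_eq_atTop] at hx'
    refine hx'.mono fun n hn => ?_
    obtain ⟨k, hk, hkx⟩ := not_subset.1 hn
    exact mem_iUnion₂.2 ⟨k, hk, by simpa [chi] using hkx⟩
  · obtain ⟨k, hk, hfk⟩ := mem_iUnion₂.1 hfU
    simp [hf k (hn.trans (P.mono.le_apply.trans hk.1))] at hfk

lemma MSet_subset_MSet {P Q : IntervalPartition} {j : ℕ → ℕ} (hj : j.Injective)
    (hPQ : ∀ᶠ n in atTop, P.I (j n) ⊆ Q.I n) : MSet P ⊆ MSet Q := by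
  rintro x ⟨hx, hPx⟩
  rw [← Nat.cofinite_eq_atTop, eventually_cofinite] at hPQ
  refine ⟨hx, (hPQ.union (hPx.preimage hj.injOn)).subset fun n hn => ?_⟩
  by_cases h : P.I (j n) ⊆ Q.I n
  · exact Or.inr (h.trans hn)
  · exact Or.inl h

def almostSubsets (y : Set ℕ) : Set (Set ℕ) := {z | z.Infinite ∧ (z \ y).Finite}

lemma almostSubsets_mem_BM {y : Set ℕ} (hy : yᶜ.Infinite) : almostSubsets y ∈ BM := by
  refine ⟨fun z hz => hz.1,
    fun z hz w hw hwz => ⟨hw, (hwz.union hz.2).subset (sdiff_triangle w z y)⟩,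
    IsMeagre.mono ?_ (isMeagre_setOf_eventually_mem (fun _ => true)
      (U := fun n => {f | f n = true → n ∈ y})
      (fun n => (isClosed_discrete {b : Bool | b = true → n ∈ y}).preimage
        (continuous_apply n : Continuous fun f : ℕ → Bool => f n))
      fun m => ?_)⟩
  · rintro _ ⟨z, ⟨-, hz⟩, rfl⟩
    have hz' := hz.eventually_cofinite_notMem
    rw [Nat.cofinite_eq_atTop] at hz'
    exact hz'.mono fun n hn hzn => not_not.1 fun hny => hn ⟨chi_eq_true.1 hzn, hny⟩
  · exact ((Nat.frequently_atTop_iff_infinite.2 hy).and_eventually (eventually_ge_atTop m)).mono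
      fun n hn f hf hfU => hn.1 (hfU (hf n hn.2))

lemma not_meagerSet_infinite_compl_infinite :
    ¬ MeagerSet {y : Set ℕ | y.Infinite ∧ yᶜ.Infinite} := by
  intro h
  refine not_isMeagre_of_isOpen isOpen_univ univ_nonempty ((h.union
    ((isMeagre_setOf_eventually_eq false).union (isMeagre_setOf_eventually_eq true))).mono
    fun f _ => ?_)
  by_cases ht : ∃ᶠ n in atTop, f n = true
  · by_cases hf : ∃ᶠ n in atTop, f n = false
    · refine Or.inl ⟨{n | f n = true}, ⟨Nat.frequently_atTop_iff_infinite.1 ht, ?_⟩, chi_setOf f⟩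
      simpa [compl_ofPred] using Nat.frequently_atTop_iff_infinite.1 hf
    · exact Or.inr (Or.inr (by simpa using not_frequently.1 hf))
  · exact Or.inr (Or.inl (by simpa using not_frequently.1 ht))

lemma sUnion_BM_notMem_BM : ⋃₀ BM ∉ BM := fun h =>
  not_meagerSet_infinite_compl_infinite <| h.2.2.mono fun y hy =>
    mem_sUnion.2 ⟨almostSubsets y, almostSubsets_mem_BM hy.2, hy.1, by simp⟩

theorem DownClosed.exists_subset_MSet {X : Set (Set ℕ)} (hdc : DownClosed X) (hX : X ⊆ InfSets)
    (hm : MeagerSet X) : ∃ P : IntervalPartition, X ⊆ MSet P := by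
  obtain ⟨U, hanti, hopen, hdense, hdisj⟩ := IsMeagre.exists_antitone_isOpen_dense hm
  obtain ⟨P, hP⟩ := IntervalPartition.exists_isAdaptedTo hopen hdense
  refine ⟨P, fun x hx => ⟨hX hx, not_not.1 fun (hA : {n | P.I n ⊆ x}.Infinite) => ?_⟩⟩
  obtain ⟨g, hgA, hgnA⟩ := hP.exists_supported_mem {n | P.I n ⊆ x}
  let y := {k | g k = true}
  have hyx : y ⊆ x := fun k hk => by
    obtain ⟨n, hn⟩ := P.exists_mem_I k
    by_cases hnA : P.I n ⊆ x
    · exact hnA hn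
    · simp [y, hgnA n hnA k hn] at hk
  have hy : y.Infinite := (hA.image P.mono.injective.injOn).mono <| by
    rintro _ ⟨n, hn, rfl⟩
    exact (hgA n hn).1
  have hyX : y ∈ X := hdc x hx y hy (by rw [sdiff_eq_empty.2 hyx]; exact finite_empty)
  obtain ⟨n₀, hn₀⟩ : ∃ n₀, g ∉ U n₀ := by
    simpa [y, chi_setOf] using disjoint_left.1 hdisj (mem_image_of_mem chi hyX)
  obtain ⟨n, hnA, hn⟩ := hA.exists_gt n₀
  exact hn₀ (hanti hn.le (hgA n hnA).2)

lemma exists_evMaj_of_mk_lt_bNum {ι : Type} (f : ι → ℕ → ℕ) (hι : #ι < bNum) :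
    ∃ g, ∀ i, EvMaj (f i) g := by
  by_contra! h
  have hb : bNum ≤ #(range f) := csInf_le' ⟨range f, rfl, fun g => ?_⟩
  · exact (hb.trans mk_range_le).not_gt hι
  obtain ⟨i, hi⟩ := h g
  exact ⟨f i, mem_range_self i, hi⟩

theorem meagerSet_iUnion_of_mk_lt_bNum {ι : Type} (X : ι → Set (Set ℕ)) (hι : #ι < bNum)
    (hX : ∀ i, X i ⊆ InfSets ∧ DownClosed (X i) ∧ MeagerSet (X i)) : MeagerSet (⋃ i, X i) := by
  choose P hP using fun i => (hX i).2.1.exists_subset_MSet (hX i).1 (hX i).2.2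
  obtain ⟨g, hg⟩ := exists_evMaj_of_mk_lt_bNum (fun i k => (P i).e (k + 1)) hι
  let Q := IntervalPartition.ofNext (fun _ m => m + g m + 1) (fun _ _ => by omega)
  refine (meagerSet_MSet Q).mono (iUnion_subset fun i =>
    (hP i).trans (MSet_subset_MSet Q.mono.injective ?_))
  filter_upwards [Q.mono.tendsto_atTop.eventually (hg i)] with n hn k hk
  refine ⟨(P i).mono.le_apply.trans hk.1, hk.2.trans_le (hn.trans ?_)⟩
  simp only [Q, IntervalPartition.ofNext_e_succ]
  omega

lemma sUnion_mem_BM_of_mk_lt_bNum {S : Set (Set (Set ℕ))} (hS : S ⊆ BM) (hlt : #S < bNum) :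
    ⋃₀ S ∈ BM := by
  refine ⟨sUnion_subset fun X hX => (hS hX).1, ?_, ?_⟩
  · rintro y ⟨X, hX, hyX⟩ x hx hxy
    exact ⟨X, hX, (hS hX).2.1 y hyX x hx hxy⟩
  · rw [sUnion_eq_iUnion]
    exact meagerSet_iUnion_of_mk_lt_bNum _ hlt fun X => hS X.2

/-- 𝔟 ≤ add(B_M). -/
theorem stmt6 :
    bNum ≤ addBM ∧
    ∀ (ι : Type) (X : ι → Set (Set ℕ)), #ι < bNum →
      (∀ i, X i ⊆ InfSets ∧ DownClosed (X i) ∧ MeagerSet (X i)) →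
      MeagerSet (⋃ i, X i) := by
  refine ⟨le_csInf ⟨_, BM, subset_rfl, rfl, sUnion_BM_notMem_BM⟩ ?_,
    fun ι X hι hX => meagerSet_iUnion_of_mk_lt_bNum X hι hX⟩
  rintro c ⟨S, hS, rfl, hSU⟩
  by_contra! hlt
  exact hSU (sUnion_mem_BM_of_mk_lt_bNum hS hlt)
end

section
/- unif(B_M) ≤ 𝔟: there exists a set S of infinite, co-infinite subsets of ω with |S| ≤ 𝔟 such that S is not included in any meager downward-closed subset of [ω]^ω. -/
open Set Cardinal MeasureTheory

/-! ### Auxiliary development -/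

section CantorAux

open Filter

/-- The cylinder of all points of Cantor space agreeing with `σ` below `m`. -/
def Cyl (σ : ℕ → Bool) (m : ℕ) : Set (ℕ → Bool) := {z | ∀ i < m, z i = σ i}

lemma isOpen_cyl (σ : ℕ → Bool) (m : ℕ) : IsOpen (Cyl σ m) := by
  have h : Cyl σ m = ⋂ i ∈ Finset.range m, {z : ℕ → Bool | z i = σ i} := by
    ext z; simp [Cyl]
  rw [h]
  refine isOpen_biInter_finset fun i _ => ?_
  show IsOpen ((fun z : ℕ → Bool => z i) ⁻¹' {σ i})
  exact IsOpen.preimage (continuous_apply i) (isOpen_discrete _)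

lemma cyl_anti (σ : ℕ → Bool) {m m' : ℕ} (h : m ≤ m') : Cyl σ m' ⊆ Cyl σ m :=
  fun _z hz i hi => hz i (lt_of_lt_of_le hi h)

lemma nwd_union {α : Type*} [TopologicalSpace α] {s t : Set α}
    (hs : IsNowhereDense s) (ht : IsNowhereDense t) : IsNowhereDense (s ∪ t) := by
  rw [IsNowhereDense, closure_union]
  have h1 : interior (closure s ∪ closure t) ⊆ closure s := by
    intro z hz
    by_contra hzs
    have hsub : interior (closure s ∪ closure t) \ closure s ⊆ closure t := by
      intro w hw
      rcases interior_subset hw.1 with h | h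
      · exact absurd h hw.2
      · exact h
    have h2 : interior (closure s ∪ closure t) \ closure s ⊆ interior (closure t) :=
      interior_maximal hsub (isOpen_interior.sdiff isClosed_closure)
    rw [ht] at h2
    exact h2 ⟨hz, hzs⟩
  have h3 : interior (closure s ∪ closure t) ⊆ interior (closure s) :=
    interior_maximal h1 isOpen_interior
  rw [hs] at h3
  exact Set.eq_empty_of_subset_empty h3

/-- For a nowhere dense set, any cylinder contains a subcylinder disjoint from it. -/
lemma exists_avoid {C : Set (ℕ → Bool)} (hC : IsNowhereDense C) (σ : ℕ → Bool) (m : ℕ) :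
    ∃ m', m ≤ m' ∧ ∃ τ : ℕ → Bool, (∀ i < m, τ i = σ i) ∧ Cyl τ m' ∩ C = ∅ := by
  have hd : Dense (closure C)ᶜ := by
    rw [← interior_eq_empty_iff_dense_compl]; exact hC
  obtain ⟨z, hz1, hz2⟩ := hd.inter_open_nonempty (Cyl σ m) (isOpen_cyl σ m) ⟨σ, fun i _ => rfl⟩
  have hop : IsOpen (closure C)ᶜ := isClosed_closure.isOpen_compl
  rw [isOpen_pi_iff] at hop
  obtain ⟨I, u, hu, hsub⟩ := hop z hz2
  refine ⟨max m (I.sup id + 1), le_max_left _ _, z, fun i hi => hz1 i hi, ?_⟩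
  rw [Set.eq_empty_iff_forall_notMem]
  rintro w ⟨hw1, hw2⟩
  have hw3 : w ∈ (I : Set ℕ).pi u := by
    intro i hiI
    have hilt : i < max m (I.sup id + 1) := by
      have : i ≤ I.sup id := Finset.le_sup (f := id) hiI
      omega
    rw [hw1 i hilt]
    exact (hu i hiI).2
  exact hsub hw3 (subset_closure hw2)

/-- Uniform version: one bound `b` works for all prefixes of length `a + 1`. -/
lemma exists_ext {C : Set (ℕ → Bool)} (hC : IsNowhereDense C) (a : ℕ) :
    ∃ b, a < b ∧ ∀ σ : ℕ → Bool, ∃ τ : ℕ → Bool,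
      (∀ i ≤ a, τ i = σ i) ∧ Cyl τ b ∩ C = ∅ := by
  have H : ∀ s : Fin (a + 1) → Bool, ∃ m', (a + 1) ≤ m' ∧ ∃ τ : ℕ → Bool,
      (∀ i < a + 1, τ i = (fun i => if h : i < a + 1 then s ⟨i, h⟩ else false) i) ∧
      Cyl τ m' ∩ C = ∅ :=
    fun s => exists_avoid hC _ (a + 1)
  choose M hM T hT1 hT2 using H
  refine ⟨max (a + 1) (Finset.univ.sup M),
    lt_of_lt_of_le (Nat.lt_succ_self a) (le_max_left _ _), ?_⟩
  intro σ
  set s : Fin (a + 1) → Bool := fun i => σ i with hs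
  refine ⟨T s, ?_, ?_⟩
  · intro i hi
    have h1 := hT1 s i (by omega)
    simp only [dif_pos (show i < a + 1 by omega)] at h1
    exact h1
  · have hMs : M s ≤ max (a + 1) (Finset.univ.sup M) :=
      le_trans (Finset.le_sup (Finset.mem_univ s)) (le_max_right _ _)
    rw [Set.eq_empty_iff_forall_notMem]
    rintro w ⟨hw1, hw2⟩
    have : w ∈ Cyl (T s) (M s) ∩ C := ⟨cyl_anti _ hMs hw1, hw2⟩
    rw [hT2 s] at this
    exact this

/-- Recursive construction of the characteristic function avoiding the nowhere dense sets. -/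
def buildF (e nk : ℕ → ℕ) (pick : ℕ → (ℕ → Bool) → (ℕ → Bool)) : ℕ → ℕ → Bool
  | 0 => fun _ => false
  | (k+1) => fun i =>
      if e (nk k) ≤ i ∧ i < e (nk k + 1) then pick k (buildF e nk pick k) i
      else buildF e nk pick k i

lemma buildF_stab (e nk : ℕ → ℕ) (pick : ℕ → (ℕ → Bool) → (ℕ → Bool))
    (hmono : ∀ {k l : ℕ}, k ≤ l → e (nk k) ≤ e (nk l)) :
    ∀ {k l : ℕ}, k ≤ l → ∀ i, i < e (nk k) → buildF e nk pick l i = buildF e nk pick k i := by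
  intro k l hkl
  induction l, hkl using Nat.le_induction with
  | base => intro i _; rfl
  | succ l hkl ih =>
    intro i hi
    have hic : ¬ (e (nk l) ≤ i ∧ i < e (nk l + 1)) := by
      have := hmono hkl
      omega
    show (if e (nk l) ≤ i ∧ i < e (nk l + 1) then _ else buildF e nk pick l i) = _
    rw [if_neg hic]
    exact ih i hi

/-- Talagrand's characterization (one direction): a meager downward-closed subfamily of
`[ω]^ω` is contained in `M(Π)` for some interval partition `Π`. -/
lemma talagrand {X : Set (Set ℕ)} (hXi : X ⊆ InfSets) (hdc : DownClosed X)
    (hm : MeagerSet X) : ∃ P : IntervalPartition, ∀ x ∈ X, {n : ℕ | P.I n ⊆ x}.Finite := by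
  obtain ⟨S, hSnd, hSc, hSsub⟩ := isMeagre_iff_countable_union_isNowhereDense.mp hm
  obtain ⟨C, hCnd, hCsub⟩ : ∃ C : ℕ → Set (ℕ → Bool), (∀ n, IsNowhereDense (C n)) ∧
      chi '' X ⊆ ⋃ n, C n := by
    rcases S.eq_empty_or_nonempty with h | h
    · refine ⟨fun _ => ∅, fun _ => isNowhereDense_empty, ?_⟩
      subst h; simpa using hSsub
    · obtain ⟨f, hf⟩ := hSc.exists_eq_range h
      refine ⟨f, fun n => hSnd _ (hf ▸ Set.mem_range_self n), ?_⟩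
      rwa [hf, Set.sUnion_range] at hSsub
  -- increasing unions
  set D : ℕ → Set (ℕ → Bool) := fun n => Nat.rec (C 0) (fun k ih => ih ∪ C (k + 1)) n with hD
  have hDnd : ∀ n, IsNowhereDense (D n) := by
    intro n
    induction n with
    | zero => exact hCnd 0
    | succ n ih => exact nwd_union ih (hCnd (n + 1))
  have hCD : ∀ m n, m ≤ n → C m ⊆ D n := by
    intro m n
    induction n with
    | zero => intro h; rw [Nat.le_zero.mp h]; exact subset_rfl
    | succ n ih =>
      intro h
      rcases Nat.lt_succ_iff_lt_or_eq.mp (Nat.lt_succ_of_le h) with h' | h'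
      · exact (ih (Nat.lt_succ_iff.mp h')).trans Set.subset_union_left
      · rw [h']; exact Set.subset_union_right
  -- construct the partition
  have H : ∀ n a, ∃ b, a < b ∧ ∀ σ : ℕ → Bool, ∃ τ : ℕ → Bool,
      (∀ i ≤ a, τ i = σ i) ∧ Cyl τ b ∩ D n = ∅ := fun n a => exists_ext (hDnd n) a
  choose B hB1 hB2 using H
  set e : ℕ → ℕ := fun n => Nat.rec 0 (fun k ih => B k ih) n with hedef
  have hes : ∀ n, e (n + 1) = B n (e n) := fun n => rfl
  have hemono : StrictMono e := strictMono_nat_of_lt_succ fun n => hB1 n (e n)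
  refine ⟨⟨e, rfl, hemono⟩, ?_⟩
  intro x hx
  by_contra hfin
  have hAinf : {n : ℕ | Set.Ico (e n) (e (n + 1)) ⊆ x}.Infinite := hfin
  set p : ℕ → Prop := fun n => Set.Ico (e n) (e (n + 1)) ⊆ x with hp
  have hpinf : {n | p n}.Infinite := hAinf
  set nk : ℕ → ℕ := fun k => Nat.nth p k with hnk
  have hnkmem : ∀ k, Set.Ico (e (nk k)) (e (nk k + 1)) ⊆ x :=
    fun k => Nat.nth_mem_of_infinite hpinf k
  have hnkmono : StrictMono nk := Nat.nth_strictMono hpinf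
  have hnkge : ∀ k, k ≤ nk k := fun k => hnkmono.le_apply
  have hege : ∀ n, n ≤ e n := fun n => hemono.le_apply
  -- the recursive construction
  set pick : ℕ → (ℕ → Bool) → (ℕ → Bool) := fun k Fk =>
    Classical.choose (hB2 (nk k) (e (nk k)) (Function.update Fk (e (nk k)) true)) with hpick
  set F : ℕ → ℕ → Bool := buildF e nk pick with hF
  set T : ℕ → ℕ → Bool := fun k => pick k (F k) with hTdef
  have hT : ∀ k, (∀ i ≤ e (nk k), T k i = Function.update (F k) (e (nk k)) true i) ∧
      Cyl (T k) (B (nk k) (e (nk k))) ∩ D (nk k) = ∅ :=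
    fun k => Classical.choose_spec (hB2 (nk k) (e (nk k)) (Function.update (F k) (e (nk k)) true))
  have hTcyl : ∀ k, Cyl (T k) (e (nk k + 1)) ∩ D (nk k) = ∅ := by
    intro k
    have := (hT k).2
    rwa [← hes (nk k)] at this
  have hmono' : ∀ {k l : ℕ}, k ≤ l → e (nk k) ≤ e (nk l) :=
    fun hkl => hemono.monotone (hnkmono.monotone hkl)
  have hstab : ∀ k l, k ≤ l → ∀ i, i < e (nk k) → F l i = F k i :=
    fun k l hkl i hi => buildF_stab e nk pick hmono' hkl i hi
  set ζ : ℕ → Bool := fun i => F (i + 1) i with hζ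
  have hζF : ∀ l i, i < e (nk l) → ζ i = F l i := by
    intro l i hi
    have hi1 : i < e (nk (i + 1)) := lt_of_lt_of_le (Nat.lt_succ_self i)
      (le_trans (hnkge (i + 1)) (hege (nk (i + 1))))
    rcases le_total l (i + 1) with h | h
    · exact hstab l (i + 1) h i hi
    · exact (hstab (i + 1) l h i hi1).symm
  have hFstep : ∀ k i, e (nk k) ≤ i → i < e (nk k + 1) → F (k + 1) i = T k i := by
    intro k i h1 h2
    show (if e (nk k) ≤ i ∧ i < e (nk k + 1) then pick k (buildF e nk pick k) i
      else buildF e nk pick k i) = T k i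
    rw [if_pos ⟨h1, h2⟩]
  have hcylζ : ∀ k i, i < e (nk k + 1) → ζ i = T k i := by
    intro k i hi
    rcases lt_or_ge i (e (nk k)) with h | h
    · have h1 : ζ i = F k i := hζF k i h
      have h2 : T k i = Function.update (F k) (e (nk k)) true i := (hT k).1 i (le_of_lt h)
      rw [h1, h2, Function.update_of_ne (ne_of_lt h)]
    · have hik1 : i < e (nk (k + 1)) :=
        lt_of_lt_of_le hi (hemono.monotone (Nat.succ_le_of_lt (hnkmono (Nat.lt_succ_self k))))
      rw [hζF (k + 1) i hik1]
      exact hFstep k i h hi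
  have hζe : ∀ k, ζ (e (nk k)) = true := by
    intro k
    have h1 : e (nk k) < e (nk k + 1) := hemono (Nat.lt_succ_self _)
    rw [hcylζ k _ h1, (hT k).1 _ le_rfl, Function.update_self]
  have hζx : ∀ i, ζ i = true → i ∈ x := by
    have key : ∀ k i, F k i = true → i ∈ x := by
      intro k
      induction k with
      | zero => intro i h; exact absurd h (by simp [hF, buildF])
      | succ k ih =>
        intro i h
        by_cases hc : e (nk k) ≤ i ∧ i < e (nk k + 1)
        · exact hnkmem k (Set.mem_Ico.mpr hc)
        · apply ih i
          have : F (k + 1) i = F k i := by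
            show (if e (nk k) ≤ i ∧ i < e (nk k + 1) then _ else buildF e nk pick k i) = _
            rw [if_neg hc]
          rwa [this] at h
    exact fun i h => key (i + 1) i h
  set x' : Set ℕ := {i | ζ i = true} with hx'
  have hx'inf : x'.Infinite := by
    apply Set.infinite_of_injective_forall_mem (f := fun k => e (nk k))
    · exact (hemono.comp hnkmono).injective
    · exact fun k => hζe k
  have hx'sub : x' ⊆ x := fun i hi => hζx i hi
  have hx'X : x' ∈ X := by
    apply hdc x hx x' hx'inf
    rw [Set.diff_eq_empty.mpr hx'sub]
    exact Set.finite_empty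
  have hchi : chi x' = ζ := by
    funext i
    show @decide (i ∈ x') (Classical.dec _) = ζ i
    rcases Bool.eq_false_or_eq_true (ζ i) with h | h
    · rw [h]
      exact @decide_eq_true (i ∈ x') (Classical.dec _) (show i ∈ x' from h)
    · rw [h]
      apply @decide_eq_false (i ∈ x') (Classical.dec _)
      intro hmem
      have hmt : ζ i = true := hmem
      rw [h] at hmt
      exact Bool.false_ne_true hmt
  have hmem : ζ ∈ ⋃ n, C n := by
    rw [← hchi]
    exact hCsub ⟨x', hx'X, rfl⟩
  obtain ⟨_, ⟨m, rfl⟩, hmC⟩ := hmem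
  have h1 : ζ ∈ Cyl (T m) (e (nk m + 1)) := fun i hi => hcylζ m i hi
  have h2 : ζ ∈ D (nk m) := hCD m (nk m) (hnkge m) hmC
  exact Set.eq_empty_iff_forall_notMem.mp (hTcyl m) ζ ⟨h1, h2⟩

end CantorAux

section BlockAux

/-- Block endpoints for a function `f`: each new block dominates `f` on the previous ones. -/
def blk (f : ℕ → ℕ) : ℕ → ℕ
  | 0 => 0
  | j + 1 => max (blk f j) ((Finset.range (blk f j + 1)).sup f) + 1

lemma blk_strictMono (f : ℕ → ℕ) : StrictMono (blk f) :=
  strictMono_nat_of_lt_succ fun j =>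
    Nat.lt_succ_of_le (le_max_left _ _)

lemma blk_lt (f : ℕ → ℕ) {i j : ℕ} (h : i ≤ blk f j) : f i < blk f (j + 1) := by
  have h1 : f i ≤ (Finset.range (blk f j + 1)).sup f :=
    Finset.le_sup (Finset.mem_range.mpr (Nat.lt_succ_of_le h))
  have h2 : (Finset.range (blk f j + 1)).sup f ≤ max (blk f j) ((Finset.range (blk f j + 1)).sup f) :=
    le_max_right _ _
  exact Nat.lt_succ_of_le (h1.trans h2)

lemma blk_exists (f : ℕ → ℕ) (i : ℕ) : ∃ j, blk f j ≤ i ∧ i < blk f (j + 1) := by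
  have hex : ∃ j, i < blk f (j + 1) :=
    ⟨i, lt_of_lt_of_le (Nat.lt_succ_self i) (blk_strictMono f).le_apply⟩
  refine ⟨Nat.find hex, ?_, Nat.find_spec hex⟩
  rcases Nat.eq_zero_or_pos (Nat.find hex) with h | h
  · rw [h]; show blk f 0 ≤ i; simp [blk]
  · obtain ⟨j', hj'⟩ := Nat.exists_eq_succ_of_ne_zero (Nat.pos_iff_ne_zero.mp h)
    have h2 := Nat.find_min hex (show j' < Nat.find hex by omega)
    rw [hj']
    show blk f (j' + 1) ≤ i
    omega

lemma blk_unique (f : ℕ → ℕ) {i j j' : ℕ} (h1 : blk f j ≤ i) (h2 : i < blk f (j + 1))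
    (h3 : blk f j' ≤ i) (h4 : i < blk f (j' + 1)) : j = j' := by
  rcases lt_trichotomy j j' with h | h | h
  · have := ((blk_strictMono f).monotone (show j + 1 ≤ j' from h)).trans h3
    omega
  · exact h
  · have := ((blk_strictMono f).monotone (show j' + 1 ≤ j from h)).trans h1
    omega

/-- The union of the even-indexed blocks of `f`. -/
def xset (f : ℕ → ℕ) : Set ℕ := ⋃ j, Set.Ico (blk f (2 * j)) (blk f (2 * j + 1))

lemma xset_infinite (f : ℕ → ℕ) : (xset f).Infinite := by
  apply Set.infinite_of_injective_forall_mem (f := fun j => blk f (2 * j))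
  · intro a b hab
    have := (blk_strictMono f).injective hab
    omega
  · intro j
    exact Set.mem_iUnion.mpr ⟨j, Set.mem_Ico.mpr ⟨le_rfl, blk_strictMono f (Nat.lt_succ_self _)⟩⟩

lemma oddblock_disjoint (f : ℕ → ℕ) {i j : ℕ} (h1 : blk f (2 * j + 1) ≤ i)
    (h2 : i < blk f (2 * j + 2)) : i ∉ xset f := by
  intro hmem
  obtain ⟨j', hj'⟩ := Set.mem_iUnion.mp hmem
  rw [Set.mem_Ico] at hj'
  have h2' : i < blk f ((2 * j + 1) + 1) := h2
  have := blk_unique f h1 h2' hj'.1 hj'.2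
  omega

lemma xset_compl_infinite (f : ℕ → ℕ) : (xset f)ᶜ.Infinite := by
  apply Set.infinite_of_injective_forall_mem (f := fun j => blk f (2 * j + 1))
  · intro a b hab
    have := (blk_strictMono f).injective hab
    omega
  · intro j
    have h2 : blk f (2 * j + 1) < blk f (2 * j + 2) := blk_strictMono f (Nat.lt_succ_self _)
    exact oddblock_disjoint f le_rfl h2

end BlockAux

section BNumAux

lemma bNum_nonempty :
    {c : Cardinal | ∃ F : Set (ℕ → ℕ), #F = c ∧ ∀ g : ℕ → ℕ, ∃ f ∈ F, ¬ EvMaj f g}.Nonempty := by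
  refine ⟨_, Set.univ, rfl, fun g => ⟨fun k => g k + 1, Set.mem_univ _, ?_⟩⟩
  intro h
  obtain ⟨k, hk⟩ := h.exists
  have hk' : g k + 1 ≤ g k := hk
  omega

lemma bNum_spec : ∃ F : Set (ℕ → ℕ), #F = bNum ∧ ∀ g : ℕ → ℕ, ∃ f ∈ F, ¬ EvMaj f g := by
  have h := csInf_mem bNum_nonempty
  obtain ⟨F, h1, h2⟩ := h
  exact ⟨F, h1, h2⟩

lemma aleph0_le_bNum : ℵ₀ ≤ bNum := by
  apply le_csInf bNum_nonempty
  rintro b ⟨F, hF1, hF2⟩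
  by_contra hlt
  push_neg at hlt
  rw [← hF1] at hlt
  have hfin : F.Finite := Cardinal.lt_aleph0_iff_set_finite.mp hlt
  obtain ⟨f, hfF, hfn⟩ := hF2 (fun k => hfin.toFinset.sup (fun f0 => f0 k))
  apply hfn
  apply Filter.Eventually.of_forall
  intro k
  exact Finset.le_sup (f := fun f0 => f0 k) (hfin.mem_toFinset.mpr hfF)

end BNumAux


/-- unif(B_M) ≤ 𝔟: there is a set of at most 𝔟 infinite co-infinite subsets of ω
not included in any meager downward-closed subset of `[ω]^ω`. -/
theorem stmt10 :
    ∃ S : Set (Set ℕ), (∀ x ∈ S, x.Infinite ∧ xᶜ.Infinite) ∧ #S ≤ bNum ∧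
      ∀ X : Set (Set ℕ), X ⊆ InfSets → DownClosed X → MeagerSet X → ¬ S ⊆ X := by
  obtain ⟨F, hFcard, hFunb⟩ := bNum_spec
  refine ⟨(fun f => xset f) '' F ∪ (fun f => (xset f)ᶜ) '' F, ?_, ?_, ?_⟩
  · rintro y (⟨f, _, rfl⟩ | ⟨f, _, rfl⟩)
    · exact ⟨xset_infinite f, xset_compl_infinite f⟩
    · exact ⟨xset_compl_infinite f, by rw [compl_compl]; exact xset_infinite f⟩
  · calc #((fun f => xset f) '' F ∪ (fun f => (xset f)ᶜ) '' F : Set (Set ℕ))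
        ≤ #((fun f => xset f) '' F) + #((fun f => (xset f)ᶜ) '' F) := Cardinal.mk_union_le _ _
      _ ≤ #F + #F := add_le_add Cardinal.mk_image_le Cardinal.mk_image_le
      _ = bNum := by rw [hFcard]; exact Cardinal.add_eq_self aleph0_le_bNum
  · intro X hXi hdc hm hSX
    obtain ⟨P, hP⟩ := talagrand hXi hdc hm
    obtain ⟨f, hfF, hfnm⟩ := hFunb (fun k => P.e (k + 3))
    have hfreq : ∀ K : ℕ, ∃ k, K ≤ k ∧ P.e (k + 3) < f k := by
      intro K
      rw [EvMaj, Filter.not_eventually] at hfnm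
      obtain ⟨k, hk1, hk2⟩ := (hfnm.and_eventually (Filter.eventually_ge_atTop K)).exists
      have hk1' : ¬ f k ≤ P.e (k + 3) := hk1
      exact ⟨k, hk2, by omega⟩
    -- intervals of P fully inside some f-block
    set W : Set ℕ := {m | ∃ j, P.I m ⊆ Set.Ico (blk f j) (blk f (j + 1))} with hW
    have hWinf : W.Infinite := by
      apply Set.infinite_of_forall_exists_gt
      intro K
      obtain ⟨k, hkK, hk3⟩ := hfreq K
      obtain ⟨j, hj1, hj2⟩ := blk_exists f k
      have hek : ∀ n, n ≤ P.e n := fun n => P.mono.le_apply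
      by_cases hc : P.e (k + 2) ≤ blk f (j + 1)
      · refine ⟨k + 1, ⟨j, ?_⟩, by omega⟩
        show Set.Ico (P.e (k + 1)) (P.e (k + 2)) ⊆ Set.Ico (blk f j) (blk f (j + 1))
        apply Set.Ico_subset_Ico
        · have := hek (k + 1); omega
        · exact hc
      · refine ⟨k + 2, ⟨j + 1, ?_⟩, by omega⟩
        show Set.Ico (P.e (k + 2)) (P.e (k + 3)) ⊆ Set.Ico (blk f (j + 1)) (blk f (j + 2))
        apply Set.Ico_subset_Ico
        · omega
        · have hfk : f k < blk f (j + 2) := blk_lt f (show k ≤ blk f (j + 1) by omega)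
          omega
    set We : Set ℕ := {m | ∃ j, P.I m ⊆ Set.Ico (blk f (2 * j)) (blk f (2 * j + 1))} with hWe
    set Wo : Set ℕ := {m | ∃ j, P.I m ⊆ Set.Ico (blk f (2 * j + 1)) (blk f (2 * j + 2))} with hWo
    have hWsub : W ⊆ We ∪ Wo := by
      rintro m ⟨j, hj⟩
      rcases Nat.even_or_odd j with ⟨r, hr⟩ | ⟨r, hr⟩
      · exact Or.inl ⟨r, by rw [show 2 * r = j by omega]; exact hj⟩
      · exact Or.inr ⟨r, by rw [show 2 * r + 1 = j by omega, show 2 * r + 2 = j + 1 by omega]; exact hj⟩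
    rcases Set.infinite_union.mp (hWinf.mono hWsub) with hinf | hinf
    · have hyX : xset f ∈ X := hSX (Or.inl ⟨f, hfF, rfl⟩)
      have hsub : We ⊆ {n | P.I n ⊆ xset f} := by
        rintro m ⟨j, hj⟩
        exact hj.trans (Set.subset_iUnion (fun j => Set.Ico (blk f (2 * j)) (blk f (2 * j + 1))) j)
      exact absurd (hP _ hyX) (hinf.mono hsub)
    · have hyX : (xset f)ᶜ ∈ X := hSX (Or.inr ⟨f, hfF, rfl⟩)
      have hsub : Wo ⊆ {n | P.I n ⊆ (xset f)ᶜ} := by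
        rintro m ⟨j, hj⟩
        refine hj.trans ?_
        intro i hi
        rw [Set.mem_Ico] at hi
        exact oddblock_disjoint f hi.1 (by have := hi.2; omega)
      exact absurd (hP _ hyX) (hinf.mono hsub)
end
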